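/- Let (X_i)_{i≥1} be a sequence of independent random variables, each uniformly distributed on the interval (0,1), and let k ≥ 1 be a fixed integer. Then almost surely, as n → ∞, the normalized elementary symmetric polynomial σ_k^{(n)}/C(n,k) converges to (1/2)^k, where C(n,k) is the binomial coefficient. -/

import Mathlib

/-!
Expanding `(x₁ + ⋯ + xₙ)^k` as a sum over all maps `Fin k → {1, …, n}`, the injective maps
contribute `k! σ_k⁽ⁿ⁾`, while each of the other `n^k - n(n-1)⋯(n-k+1) = o(n^k)` maps contributes
a product of absolute value at most `1`. Hence `σ_k⁽ⁿ⁾ / C(n,k) = (x̄ₙ)^k + o(1)` for any sequence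
bounded by `1`, where `x̄ₙ` is the empirical mean, and the strong law of large numbers gives
`x̄ₙ → 1/2` almost surely.
-/

open MeasureTheory Filter ProbabilityTheory Finset Asymptotics Function

section Combinatorics

variable {α : Type*} [DecidableEq α]

theorem card_filter_injective_piFinset (s : Finset α) (k : ℕ) :
    #{f ∈ Fintype.piFinset fun _ : Fin k => s | Injective f} = (#s).descFactorial k := by
  symm
  calc (#s).descFactorial k = #(univ : Finset (Fin k ↪ s)) := by
        simp [Fintype.card_embedding_eq]
    _ = _ := by
      refine card_bij (fun e _ j => (e j : α)) (fun e _ => ?_) (fun e₁ _ e₂ _ h => ?_)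
        (fun f hf => ?_)
      · simp only [mem_filter, Fintype.mem_piFinset]
        exact ⟨fun j => (e j).2, fun a b h => e.injective (Subtype.ext h)⟩
      · ext j
        exact congrFun h j
      · simp only [mem_filter, Fintype.mem_piFinset] at hf
        exact ⟨⟨fun j => ⟨f j, hf.1 j⟩, fun a b h => hf.2 (congrArg Subtype.val h)⟩,
          mem_univ _, rfl⟩

theorem card_filter_not_injective_piFinset (s : Finset α) (k : ℕ) :
    (#{f ∈ Fintype.piFinset fun _ : Fin k => s | ¬Injective f} : ℝ) =
      (#s : ℝ) ^ k - (#s).descFactorial k := by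
  rw [eq_sub_iff_add_eq, ← card_filter_injective_piFinset, ← Nat.cast_add, add_comm,
    card_filter_add_card_filter_not, Fintype.card_piFinset]
  simp

theorem filter_injective_piFinset_image_eq {s t : Finset α} {k : ℕ} (ht : t ∈ s.powersetCard k) :
    {f ∈ {f ∈ Fintype.piFinset (fun _ : Fin k => s) | Injective f} | image f univ = t} =
      {f ∈ Fintype.piFinset fun _ : Fin k => t | Injective f} := by
  rw [mem_powersetCard] at ht
  ext f
  simp only [mem_filter, Fintype.mem_piFinset]
  constructor
  · rintro ⟨⟨-, hinj⟩, rfl⟩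
    exact ⟨fun j => mem_image_of_mem f (mem_univ j), hinj⟩
  · rintro ⟨hmem, hinj⟩
    refine ⟨⟨fun j => ht.1 (hmem j), hinj⟩, eq_of_subset_of_card_le ?_ ?_⟩
    · simpa [subset_iff] using hmem
    · rw [ht.2, card_image_of_injective _ hinj, card_univ, Fintype.card_fin]

theorem sum_filter_injective_piFinset_prod {R : Type*} [CommSemiring R] (s : Finset α) (k : ℕ)
    (x : α → R) :
    ∑ f ∈ Fintype.piFinset (fun _ : Fin k => s) with Injective f, ∏ j, x (f j) =
      k.factorial * ∑ t ∈ s.powersetCard k, ∏ i ∈ t, x i := by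
  have himage : ∀ f ∈ {f ∈ Fintype.piFinset (fun _ : Fin k => s) | Injective f},
      image f univ ∈ s.powersetCard k := by
    intro f hf
    simp only [mem_filter, Fintype.mem_piFinset] at hf
    rw [mem_powersetCard, card_image_of_injective _ hf.2, card_univ, Fintype.card_fin]
    exact ⟨fun i hi => by obtain ⟨j, -, rfl⟩ := mem_image.1 hi; exact hf.1 j, rfl⟩
  calc ∑ f ∈ Fintype.piFinset (fun _ : Fin k => s) with Injective f, ∏ j, x (f j)
      = ∑ f ∈ Fintype.piFinset (fun _ : Fin k => s) with Injective f,
          ∏ i ∈ image f univ, x i := by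
        refine sum_congr rfl fun f hf => ?_
        rw [prod_image fun a _ b _ h => (mem_filter.1 hf).2 h]
    _ = ∑ t ∈ s.powersetCard k,
          ∑ f ∈ {f ∈ Fintype.piFinset (fun _ : Fin k => s) | Injective f} with image f univ = t,
            ∏ i ∈ t, x i := (sum_fiberwise_of_maps_to' himage fun t => ∏ i ∈ t, x i).symm
    _ = k.factorial * ∑ t ∈ s.powersetCard k, ∏ i ∈ t, x i := by
        rw [mul_sum]
        refine sum_congr rfl fun t ht => ?_
        rw [sum_const, filter_injective_piFinset_image_eq ht, card_filter_injective_piFinset,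
          (mem_powersetCard.1 ht).2, Nat.descFactorial_self, nsmul_eq_mul]

theorem abs_sum_pow_sub_factorial_mul_sum_powersetCard_le (s : Finset α) (k : ℕ) {x : α → ℝ}
    (hx : ∀ i ∈ s, |x i| ≤ 1) :
    |(∑ i ∈ s, x i) ^ k - k.factorial * ∑ t ∈ s.powersetCard k, ∏ i ∈ t, x i| ≤
      (#s : ℝ) ^ k - (#s).descFactorial k := by
  rw [sum_pow', ← sum_filter_add_sum_filter_not _ (fun f => Injective f),
    sum_filter_injective_piFinset_prod, add_sub_cancel_left,
    ← card_filter_not_injective_piFinset, ← mul_one (#_ : ℝ), ← nsmul_eq_mul]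
  refine (abs_sum_le_sum_abs _ _).trans (sum_le_card_nsmul _ _ _ fun f hf => ?_)
  simp only [mem_filter, Fintype.mem_piFinset] at hf
  rw [abs_prod]
  exact prod_le_one (fun j _ => abs_nonneg _) fun j _ => hx _ (hf.1 j)

end Combinatorics

theorem tendsto_sum_powersetCard_prod_div_choose {x : ℕ → ℝ} (hx : ∀ i, |x i| ≤ 1) {m : ℝ}
    (hm : Tendsto (fun n : ℕ => (∑ i ∈ range n, x i) / n) atTop (nhds m)) (k : ℕ) :
    Tendsto (fun n : ℕ => (∑ t ∈ (range n).powersetCard k, ∏ i ∈ t, x i) / n.choose k)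
      atTop (nhds (m ^ k)) := by
  set err : ℕ → ℝ := fun n =>
    (∑ i ∈ range n, x i) ^ k - k.factorial * ∑ t ∈ (range n).powersetCard k, ∏ i ∈ t, x i
  have herr : err =o[atTop] fun n : ℕ => (n : ℝ) ^ k := by
    refine (IsBigO.of_bound 1 (Eventually.of_forall fun n => ?_)).trans_isLittleO
      (isEquivalent_descFactorial k).isLittleO
    have hdesc : (n.descFactorial k : ℝ) ≤ (n : ℝ) ^ k := mod_cast n.descFactorial_le_pow k
    rw [one_mul, Real.norm_eq_abs, Real.norm_eq_abs, Pi.sub_apply,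
      abs_sub_comm (n.descFactorial k : ℝ), abs_of_nonneg (sub_nonneg.2 hdesc)]
    simpa using abs_sum_pow_sub_factorial_mul_sum_powersetCard_le (range n) k fun i _ => hx i
  have hequiv : (fun n : ℕ => (∑ t ∈ (range n).powersetCard k, ∏ i ∈ t, x i) / n.choose k)
      ~[atTop] fun n => ((∑ i ∈ range n, x i) / n) ^ k - err n / (n : ℝ) ^ k := by
    refine (IsEquivalent.refl.div (isEquivalent_choose k)).congr_right ?_
    filter_upwards [eventually_ne_atTop 0] with n hn
    have hn : (n : ℝ) ≠ 0 := mod_cast hn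
    simp only [Pi.div_apply, err, div_pow]
    field_simp
    ring
  rw [hequiv.tendsto_nhds_iff]
  simpa using (hm.pow k).sub herr.tendsto_div_nhds_zero

section Uniform

variable {Ω : Type*} [MeasurableSpace Ω] {P : Measure Ω} {X : Ω → ℝ}

theorem ae_mem_of_map_eq_restrict {β : Type*} [MeasurableSpace β] {Y : Ω → β}
    (hY : AEMeasurable Y P) {μ : Measure β} {s : Set β} (hs : MeasurableSet s)
    (h : P.map Y = μ.restrict s) : ∀ᵐ ω ∂P, Y ω ∈ s :=
  ae_of_ae_map hY (h ▸ ae_restrict_mem hs)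

theorem integral_eq_of_map_eq_restrict_Ioo (hX : AEMeasurable X P) {a b : ℝ} (hab : a ≤ b)
    (h : P.map X = volume.restrict (Set.Ioo a b)) : ∫ ω, X ω ∂P = (b ^ 2 - a ^ 2) / 2 := by
  rw [← integral_map (f := fun x => x) hX aestronglyMeasurable_id, h,
    ← integral_Ioc_eq_integral_Ioo, ← intervalIntegral.integral_of_le hab]
  simp [integral_id]

end Uniform

theorem tendsto_esymm_div_choose_ae_general
    {Ω : Type*} [MeasurableSpace Ω] (P : Measure Ω) [IsProbabilityMeasure P]
    (X : ℕ → Ω → ℝ) (hmeas : ∀ i, Measurable (X i))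
    (hindep : iIndepFun X P)
    (hunif : ∀ i, Measure.map (X i) P = volume.restrict (Set.Ioo (0:ℝ) 1))
    (k : ℕ) :
    ∀ᵐ ω ∂P,
      Tendsto
        (fun n : ℕ =>
          (∑ s ∈ (Finset.range n).powersetCard k, ∏ i ∈ s, X i ω) /
            (Nat.choose n k : ℝ))
        atTop (nhds ((1 / 2 : ℝ) ^ k)) := by
  have hmem : ∀ i, ∀ᵐ ω ∂P, X i ω ∈ Set.Ioo (0 : ℝ) 1 := fun i =>
    ae_mem_of_map_eq_restrict (hmeas i).aemeasurable measurableSet_Ioo (hunif i)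
  have hbound : ∀ i, ∀ᵐ ω ∂P, |X i ω| ≤ 1 := fun i =>
    (hmem i).mono fun ω h => abs_le.2 ⟨by linarith [h.1], h.2.le⟩
  have hint : Integrable (X 0) P := .of_bound (hmeas 0).aestronglyMeasurable 1 (hbound 0)
  have hmean : ∫ ω, X 0 ω ∂P = 1 / 2 := by
    rw [integral_eq_of_map_eq_restrict_Ioo (hmeas 0).aemeasurable zero_le_one (hunif 0)]
    norm_num
  have hslln := strong_law_ae_real X hint (fun i j hij => hindep.indepFun hij) fun i =>
    ⟨(hmeas i).aemeasurable, (hmeas 0).aemeasurable, by rw [hunif i, hunif 0]⟩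
  filter_upwards [ae_all_iff.2 hbound, hslln] with ω hω hωmean
  rw [hmean] at hωmean
  exact tendsto_sum_powersetCard_prod_div_choose hω hωmean k

/-- If `(X i)` is an i.i.d. sequence of random variables uniformly distributed on `(0,1)`
and `k ≥ 1` is a fixed integer, then almost surely the normalized elementary symmetric
polynomial `σ_k⁽ⁿ⁾ / C(n,k)` converges to `(1/2)^k`. -/
theorem tendsto_esymm_div_choose_ae
    {Ω : Type*} [MeasurableSpace Ω] (P : Measure Ω) [IsProbabilityMeasure P]
    (X : ℕ → Ω → ℝ) (hmeas : ∀ i, Measurable (X i))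
    (hindep : iIndepFun X P)
    (hunif : ∀ i, Measure.map (X i) P = volume.restrict (Set.Ioo (0:ℝ) 1))
    (k : ℕ) (hk : 1 ≤ k) :
    ∀ᵐ ω ∂P,
      Tendsto
        (fun n : ℕ =>
          (∑ s ∈ (Finset.range n).powersetCard k, ∏ i ∈ s, X i ω) /
            (Nat.choose n k : ℝ))
        atTop (nhds ((1 / 2 : ℝ) ^ k)) :=
  tendsto_esymm_div_choose_ae_general P X hmeas hindep hunif k
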